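/- arXiv:0905.1937 — 2 statements merged into one kernel-verified Lean document; each statement's English description precedes it below -/
import Mathlib

section
/- Let N ≥ 5 and define y(r) = r^{−N/2+2} − 1 for r ∈ (0,1). Then y is positive on (0,1) and satisfies y''(r) + ((N−3)/r) y'(r) + ((N−4)²/(4(r² − r^{N/2}))) y(r) = 0 for all r ∈ (0,1). -/
/-! With `a = 2 - N/2` we have `y' = a r^(a-1)` and `y'' = a (a-1) r^(a-2)`, so
`y'' + (N-3)/r y' = -a² r^(a-2)` because `a + N - 4 = -a`. The ODE then follows from
`(N-4)²/4 = a²` and the factorisation `r^a - 1 = r^(a-2) (r² - r^(N/2))`. Positivity is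
`r^a > 1` for `0 < r < 1` and `a < 0`. -/

open Real

theorem deriv_rpow_const_sub (a c : ℝ) :
    deriv (fun x : ℝ => x ^ a - c) = fun x => a * x ^ (a - 1) := by
  funext x
  rw [deriv_sub_const, Real.deriv_rpow_const]

theorem deriv_deriv_rpow_const_sub (a c : ℝ) :
    deriv (deriv fun x : ℝ => x ^ a - c) = fun x => a * (a - 1) * x ^ (a - 2) := by
  funext x
  rw [deriv_rpow_const_sub, deriv_const_mul_field, Real.deriv_rpow_const, sub_sub,
    one_add_one_eq_two, mul_assoc]

theorem rpow_sub_one_solves_radial_ode {N r : ℝ} (hr : 0 < r) (hD : r ^ 2 ≠ r ^ (N / 2)) :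
    deriv (deriv fun x : ℝ => x ^ (-N / 2 + 2) - 1) r
        + (N - 3) / r * deriv (fun x : ℝ => x ^ (-N / 2 + 2) - 1) r
        + (N - 4) ^ 2 / (4 * (r ^ 2 - r ^ (N / 2))) * (r ^ (-N / 2 + 2) - 1) = 0 := by
  set p := r ^ (-N / 2) with hp
  have hpow_sub_two : r ^ (-N / 2 + 2 - 2) = p := by rw [add_sub_cancel_right]
  have hpow_sub_one : r ^ (-N / 2 + 2 - 1) = p * r := by
    rw [show -N / 2 + 2 - 1 = -N / 2 + 1 by ring, rpow_add hr, rpow_one]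
  have hpow : r ^ (-N / 2 + 2) = p * r ^ 2 := by rw [rpow_add hr, rpow_two]
  have hinv : r ^ (N / 2) * p = 1 := by
    rw [hp, ← rpow_add hr, neg_div, add_neg_cancel, rpow_zero]
  have hfactor : p * r ^ 2 - 1 = p * (r ^ 2 - r ^ (N / 2)) := by linear_combination hinv
  rw [deriv_deriv_rpow_const_sub, deriv_rpow_const_sub]
  beta_reduce
  rw [hpow_sub_two, hpow_sub_one, hpow, hfactor]
  field_simp [sub_ne_zero.mpr hD]
  ring

theorem y_positive_solution (N : ℕ) (hN : 5 ≤ N)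
    (y : ℝ → ℝ) (hy : ∀ r : ℝ, y r = r ^ (-(N : ℝ) / 2 + 2) - 1) :
    ∀ r ∈ Set.Ioo (0 : ℝ) 1,
      0 < y r ∧
      deriv (deriv y) r + ((N : ℝ) - 3) / r * deriv y r +
        ((N : ℝ) - 4) ^ 2 / (4 * (r ^ 2 - r ^ ((N : ℝ) / 2))) * y r = 0 := by
  rintro r ⟨hr0, hr1⟩
  have hN' : (5 : ℝ) ≤ N := by exact_mod_cast hN
  have hy_eq : y = fun x => x ^ (-(N : ℝ) / 2 + 2) - 1 := funext hy
  have hD : r ^ (N / 2 : ℝ) < r ^ 2 := by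
    rw [← rpow_two]
    exact rpow_lt_rpow_of_exponent_gt hr0 hr1 (by linarith)
  refine ⟨?_, ?_⟩
  · rw [hy, sub_pos]
    exact one_lt_rpow_of_pos_of_lt_one_of_neg hr0 hr1 (by linarith)
  · rw [hy_eq]
    exact rpow_sub_one_solves_radial_ode hr0 hD.ne'
end

section
/- Let 13 ≤ N ≤ 31 and define w_{3.5}(x) = −4 ln|x| − 8/7 + (8/7)|x|^{7/2} on ℝ^N \ {0}. Let λ'_N be given by the table: λ'₁₃=2525, λ'₁₄=3050, λ'₁₅=3610, λ'₁₆=4230, λ'₁₇=4900, λ'₁₈=5650, λ'₁₉=6400, λ'₂₀=7250, λ'₂₁=8150, λ'₂₂=9050, λ'₂₃=10100, λ'₂₄=11100, λ'₂₅=12200, λ'₂₆=13500, λ'₂₇=14500, λ'₂₈=16000, λ'₂₉=17000, λ'₃₀=18500, λ'₃₁=20000. Then for every x with 0 < |x| < 1, Δ²w_{3.5}(x) ≤ λ'_N e^{w_{3.5}(x)}. -/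
open Real MeasureTheory Metric

noncomputable def lap {N : ℕ} (u : EuclideanSpace ℝ (Fin N) → ℝ)
    (x : EuclideanSpace ℝ (Fin N)) : ℝ :=
  ∑ i : Fin N, iteratedFDeriv ℝ 2 u x ![EuclideanSpace.single i 1, EuclideanSpace.single i 1]

/-- The constants $λ'_N$ from the paper's table, for $13 ≤ N ≤ 31$. -/
def lambda' : ℕ → ℝ
  | 13 => 2525
  | 14 => 3050
  | 15 => 3610
  | 16 => 4230
  | 17 => 4900
  | 18 => 5650
  | 19 => 6400
  | 20 => 7250
  | 21 => 8150
  | 22 => 9050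
  | 23 => 10100
  | 24 => 11100
  | 25 => 12200
  | 26 => 13500
  | 27 => 14500
  | 28 => 16000
  | 29 => 17000
  | 30 => 18500
  | 31 => 20000
  | _ => 0

/-!
Both `w_m` and `Δ w_m` are combinations of `log ‖x‖`, constants and powers `‖x‖ ^ p`, whose
Laplacians come from the radial formula `Δ g(‖x‖²) = 4 ‖x‖² g''(‖x‖²) + 2 N g'(‖x‖²)`. For
`m = 7/2` this gives `Δ² w = ‖x‖⁻⁴ (8 (N-2)(N-4) + (3/2)(2N+3)(2N-1) t)` with `t = ‖x‖ ^ (7/2)`,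
while `exp w = ‖x‖⁻⁴ e^{-8/7} e^{8t/7}`. After cancelling `‖x‖⁻⁴` the claim compares an affine
function of `t ≥ 0` with an exponential, and for each `N` it follows from the cubic Taylor lower
bound of `exp`.
-/

open InnerProductSpace Laplacian Filter Topology Module

theorem lap_eq_laplacian {N : ℕ} (u : EuclideanSpace ℝ (Fin N) → ℝ) : lap u = Δ u := by
  rw [laplacian_eq_iteratedFDeriv_orthonormalBasis u (EuclideanSpace.basisFun (Fin N) ℝ)]
  ext x
  simp [lap]

noncomputable def wm {E : Type*} [Norm E] (m : ℝ) (y : E) : ℝ :=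
  -4 * Real.log ‖y‖ - 4 / m + 4 / m * ‖y‖ ^ m

theorem exp_wm {E : Type*} [NormedAddCommGroup E] (m : ℝ) {x : E} (hx : x ≠ 0) :
    Real.exp (wm m x) = ‖x‖ ^ (-4 : ℝ) * Real.exp (-4 / m) * Real.exp (4 / m * ‖x‖ ^ m) := by
  rw [wm, sub_eq_add_neg, Real.exp_add, Real.exp_add,
    Real.rpow_def_of_pos (norm_pos_iff.mpr hx) (-4), mul_comm (Real.log _), neg_div]

section Radial

variable {E : Type*} [NormedAddCommGroup E] [InnerProductSpace ℝ E] [FiniteDimensional ℝ E]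

theorem laplacian_comp_norm_sq {g g' : ℝ → ℝ} {g'' : ℝ} {x : E}
    (hg : ∀ᶠ s in 𝓝 (‖x‖ ^ 2), HasDerivAt g (g' s) s) (hg' : HasDerivAt g' g'' (‖x‖ ^ 2)) :
    Δ (fun y : E => g (‖y‖ ^ 2)) x = 4 * ‖x‖ ^ 2 * g'' + 2 * finrank ℝ E * g' (‖x‖ ^ 2) := by
  let B : E →L[ℝ] E →L[ℝ] ℝ := innerSL ℝ
  have hB (y v : E) : B y v = ⟪y, v⟫_ℝ := rfl
  have hfd : fderiv ℝ (fun y => g (‖y‖ ^ 2)) =ᶠ[𝓝 x] fun y => (2 * g' (‖y‖ ^ 2)) • B y := by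
    have hsq : Continuous fun y : E => ‖y‖ ^ 2 := by fun_prop
    filter_upwards [hsq.continuousAt.eventually hg] with y hy
    refine (hy.comp_hasFDerivAt y (hasStrictFDerivAt_norm_sq y).hasFDerivAt).fderiv.trans ?_
    ext v
    simp only [smul_apply, coe_innerSL_apply, nsmul_eq_mul, Nat.cast_ofNat, smul_eq_mul, hB]
    ring
  have hfd2 : HasFDerivAt (fun y => (2 * g' (‖y‖ ^ 2)) • B y) _ x :=
    ((hg'.comp_hasFDerivAt x (hasStrictFDerivAt_norm_sq x).hasFDerivAt).const_mul 2).smul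
      B.hasFDerivAt
  let b := stdOrthonormalBasis ℝ E
  have hparseval : ∑ i, ⟪x, b i⟫_ℝ * ⟪x, b i⟫_ℝ = ‖x‖ ^ 2 := by
    simpa [real_inner_comm, real_inner_self_eq_norm_sq] using b.sum_inner_mul_inner x x
  have hsum : ∑ i, 2 * (g'' * (2 * ⟪x, b i⟫_ℝ)) * ⟪x, b i⟫_ℝ
      = 4 * g'' * ∑ i, ⟪x, b i⟫_ℝ * ⟪x, b i⟫_ℝ := by
    rw [Finset.mul_sum]
    exact Finset.sum_congr rfl fun _ _ => by ring
  rw [laplacian_eq_iteratedFDeriv_orthonormalBasis _ b]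
  simp only [iteratedFDeriv_two_apply, Matrix.cons_val_zero, Matrix.cons_val_one, hfd.fderiv_eq,
    hfd2.fderiv]
  simp only [Function.comp_apply, add_apply, smul_apply, ContinuousLinearMap.smulRight_apply,
    coe_innerSL_apply, nsmul_eq_mul, Nat.cast_ofNat, smul_eq_mul, hB, inner_self_eq_norm_sq_to_K,
    OrthonormalBasis.norm_eq_one, ringHom_apply, one_pow, mul_one, Finset.sum_add_distrib,
    Finset.sum_const, Finset.card_univ, Fintype.card_fin]
  linear_combination hsum + 4 * g'' * hparseval

theorem laplacian_norm_rpow (p : ℝ) {x : E} (hx : x ≠ 0) :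
    Δ (fun y : E => ‖y‖ ^ p) x = p * (p + finrank ℝ E - 2) * ‖x‖ ^ (p - 2) := by
  have hr : 0 < ‖x‖ := norm_pos_iff.mpr hx
  have hsq_rpow (y : E) (a : ℝ) : (‖y‖ ^ 2) ^ a = ‖y‖ ^ (2 * a) := by
    rw [← Real.rpow_natCast_mul (norm_nonneg y)]
    norm_num
  have hg : ∀ᶠ s in 𝓝 (‖x‖ ^ 2), HasDerivAt (fun s => s ^ (p / 2)) (p / 2 * s ^ (p / 2 - 1)) s :=
    (eventually_gt_nhds (by positivity)).mono fun s hs =>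
      Real.hasDerivAt_rpow_const (Or.inl (ne_of_gt hs))
  have hg' := (Real.hasDerivAt_rpow_const (p := p / 2 - 1)
    (Or.inl (pow_pos hr 2).ne')).const_mul (p / 2)
  have hfun : (fun y : E => ‖y‖ ^ p) = fun y => (‖y‖ ^ 2) ^ (p / 2) := by
    ext y
    rw [hsq_rpow]
    ring_nf
  have hpow : ‖x‖ ^ (p - 2) = ‖x‖ ^ (p - 4) * ‖x‖ ^ 2 := by
    rw [← Real.rpow_add_natCast hr.ne']
    push_cast
    ring_nf
  have hsq₁ : (‖x‖ ^ 2) ^ (p / 2 - 1) = ‖x‖ ^ (p - 2) := by rw [hsq_rpow]; ring_nf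
  have hsq₂ : (‖x‖ ^ 2) ^ (p / 2 - 1 - 1) = ‖x‖ ^ (p - 4) := by rw [hsq_rpow]; ring_nf
  rw [hfun, laplacian_comp_norm_sq hg hg', hsq₁, hsq₂, hpow]
  ring

theorem laplacian_log_norm {x : E} (hx : x ≠ 0) :
    Δ (fun y : E => Real.log ‖y‖) x = (finrank ℝ E - 2) * ‖x‖ ^ (-2 : ℝ) := by
  have hr : 0 < ‖x‖ := norm_pos_iff.mpr hx
  have hg : ∀ᶠ s in 𝓝 (‖x‖ ^ 2), HasDerivAt (fun s => Real.log s / 2) (s⁻¹ / 2) s :=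
    (eventually_gt_nhds (by positivity)).mono fun s hs =>
      (Real.hasDerivAt_log (ne_of_gt hs)).div_const 2
  have hg' := (hasDerivAt_inv (pow_pos hr 2).ne').div_const 2
  have hfun : (fun y : E => Real.log ‖y‖) = fun y => Real.log (‖y‖ ^ 2) / 2 := by
    ext y
    rw [Real.log_pow]
    ring
  rw [hfun, laplacian_comp_norm_sq hg hg', Real.rpow_neg hr.le, Real.rpow_two]
  field_simp
  ring

theorem laplacian_smul_norm_rpow_add {x : E} (hx : x ≠ 0) (a b p q : ℝ) :
    Δ ((a • fun y : E => ‖y‖ ^ p) + b • fun y : E => ‖y‖ ^ q) x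
      = a * (p * (p + finrank ℝ E - 2) * ‖x‖ ^ (p - 2))
        + b * (q * (q + finrank ℝ E - 2) * ‖x‖ ^ (q - 2)) := by
  have hpow (r : ℝ) : ContDiffAt ℝ 2 (fun y : E => ‖y‖ ^ r) x :=
    (contDiffAt_norm ℝ hx).rpow_const_of_ne (norm_ne_zero_iff.mpr hx)
  have hsmul (c r : ℝ) : ContDiffAt ℝ 2 (c • fun y : E => ‖y‖ ^ r) x := (hpow r).const_smul c
  rw [(hsmul a p).laplacian_add (hsmul b q), laplacian_smul _ (hpow p),
    laplacian_smul _ (hpow q), laplacian_norm_rpow p hx, laplacian_norm_rpow q hx]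
  rfl

theorem laplacian_wm {m : ℝ} (hm : m ≠ 0) {x : E} (hx : x ≠ 0) :
    Δ (wm m : E → ℝ) x = -4 * (finrank ℝ E - 2) * ‖x‖ ^ (-2 : ℝ)
      + 4 * (m + finrank ℝ E - 2) * ‖x‖ ^ (m - 2) := by
  have hnorm : ‖x‖ ≠ 0 := norm_ne_zero_iff.mpr hx
  have hlog : ContDiffAt ℝ 2 (fun y : E => Real.log ‖y‖) x := (contDiffAt_norm ℝ hx).log hnorm
  have hpow : ContDiffAt ℝ 2 (fun y : E => ‖y‖ ^ m) x :=
    (contDiffAt_norm ℝ hx).rpow_const_of_ne hnorm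
  have hlog' : ContDiffAt ℝ 2 ((-4 : ℝ) • fun y : E => Real.log ‖y‖) x := hlog.const_smul (-4 : ℝ)
  have hpow' : ContDiffAt ℝ 2 ((4 / m : ℝ) • fun y : E => ‖y‖ ^ m) x := hpow.const_smul (4 / m : ℝ)
  have hconst : ContDiffAt ℝ 2 (fun _ : E => -4 / m) x := contDiffAt_const
  have hfun : wm m = ((-4 : ℝ) • fun y : E => Real.log ‖y‖) + (fun _ => -4 / m)
      + (4 / m : ℝ) • fun y : E => ‖y‖ ^ m := by
    ext y
    simp only [wm, Pi.add_apply, Pi.smul_apply, smul_eq_mul]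
    ring
  have hlog_add : ContDiffAt ℝ 2 (((-4 : ℝ) • fun y : E => Real.log ‖y‖) + fun _ => -4 / m) x :=
    hlog'.add hconst
  rw [hfun, hlog_add.laplacian_add hpow', hlog'.laplacian_add hconst,
    laplacian_smul _ hlog, laplacian_smul _ hpow, laplacian_const, laplacian_log_norm hx,
    laplacian_norm_rpow m hx]
  simp only [smul_eq_mul, Pi.zero_apply]
  field_simp
  ring

theorem bilaplacian_wm {m : ℝ} (hm : m ≠ 0) {x : E} (hx : x ≠ 0) :
    Δ (Δ (wm m : E → ℝ)) x = 8 * (finrank ℝ E - 2) * (finrank ℝ E - 4) * ‖x‖ ^ (-4 : ℝ)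
      + 4 * (m + finrank ℝ E - 2) * (m - 2) * (m + finrank ℝ E - 4) * ‖x‖ ^ (m - 4) := by
  have hlap : Δ (wm m : E → ℝ) =ᶠ[𝓝 x]
      ((-4 * (finrank ℝ E - 2) : ℝ) • fun y : E => ‖y‖ ^ (-2 : ℝ))
        + (4 * (m + finrank ℝ E - 2) : ℝ) • fun y : E => ‖y‖ ^ (m - 2) := by
    filter_upwards [eventually_ne_nhds hx] with y hy
    rw [laplacian_wm hm hy]
    rfl
  rw [(laplacian_congr_nhds hlap).eq_of_nhds, laplacian_smul_norm_rpow_add hx]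
  ring_nf

theorem bilaplacian_wm_le_mul_exp_wm_iff {m : ℝ} (hm : m ≠ 0) {x : E} (hx : x ≠ 0) (c : ℝ) :
    Δ (Δ (wm m : E → ℝ)) x ≤ c * Real.exp (wm m x) ↔
      8 * (finrank ℝ E - 2) * (finrank ℝ E - 4)
        + 4 * (m + finrank ℝ E - 2) * (m - 2) * (m + finrank ℝ E - 4) * ‖x‖ ^ m
        ≤ c * Real.exp (-4 / m) * Real.exp (4 / m * ‖x‖ ^ m) := by
  have hr : 0 < ‖x‖ := norm_pos_iff.mpr hx
  have hpow : ‖x‖ ^ (m - 4) = ‖x‖ ^ m * ‖x‖ ^ (-4 : ℝ) := by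
    rw [← Real.rpow_add hr, sub_eq_add_neg]
  rw [bilaplacian_wm hm hx, exp_wm m hx, hpow]
  refine Iff.trans ?_ (mul_le_mul_iff_of_pos_right (Real.rpow_pos_of_pos hr (-4)))
  apply iff_of_eq
  congr 1 <;> ring

end Radial

theorem lambda'_nonneg (N : ℕ) : 0 ≤ lambda' N := by
  unfold lambda'
  split <;> norm_num

theorem exp_neg_eight_div_seven_gt : 0.31881 < Real.exp (-(8 / 7)) := by
  have hsev : Real.exp (1 / 7) ≤ 1 + 1 / 7 + 1 / 98 + 1 / 2058 + 5 / 230496 := by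
    have h := Real.exp_bound' (x := 1 / 7) (by norm_num) (by norm_num) (n := 4) (by norm_num)
    norm_num [Finset.sum_range_succ, Nat.factorial] at h ⊢
    linarith
  have hsplit : Real.exp (8 / 7) = Real.exp 1 * Real.exp (1 / 7) := by
    rw [← Real.exp_add]
    norm_num
  rw [Real.exp_neg, lt_inv_comm₀ (by norm_num) (Real.exp_pos _), hsplit]
  nlinarith [Real.exp_one_lt_d9, Real.exp_pos 1, Real.exp_pos (1 / 7)]

theorem cubic_le_exp {u : ℝ} (hu : 0 ≤ u) : 1 + u + u ^ 2 / 2 + u ^ 3 / 6 ≤ Real.exp u := by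
  have h := Real.sum_le_exp_of_nonneg hu 4
  norm_num [Finset.sum_range_succ, Nat.factorial] at h
  linarith

/- For `N = 13` and `t = 0` the table leaves under 2% of slack (`792` against
`2525 e^{-8/7} ≈ 805`), hence five digits of `e^{-8/7}`; the quadratic Taylor bound of `exp`
already fails for `N = 13`. -/
theorem affine_le_lambda'_mul_cubic {N : ℕ} (hN1 : 13 ≤ N) (hN2 : N ≤ 31) {t : ℝ} (ht : 0 ≤ t) :
    8 * (N - 2) * (N - 4) + 3 / 2 * (2 * N + 3) * (2 * N - 1) * t
      ≤ lambda' N * 0.31881 * (1 + 8 / 7 * t + (8 / 7 * t) ^ 2 / 2 + (8 / 7 * t) ^ 3 / 6) := by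
  interval_cases N <;>
  · norm_num [lambda']
    nlinarith [sq_nonneg (t - 1 / 8), sq_nonneg (t - 1 / 4), mul_nonneg (mul_nonneg ht ht) ht,
      mul_nonneg ht (sq_nonneg (t - 1 / 5))]

theorem affine_le_lambda'_mul_exp {N : ℕ} (hN1 : 13 ≤ N) (hN2 : N ≤ 31) {t : ℝ} (ht : 0 ≤ t) :
    8 * (N - 2) * (N - 4) + 3 / 2 * (2 * N + 3) * (2 * N - 1) * t
      ≤ lambda' N * Real.exp (-(8 / 7)) * Real.exp (8 / 7 * t) := by
  have hcubic := cubic_le_exp (u := 8 / 7 * t) (by positivity)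
  have hlam := lambda'_nonneg N
  calc _ ≤ lambda' N * 0.31881 * (1 + 8 / 7 * t + (8 / 7 * t) ^ 2 / 2 + (8 / 7 * t) ^ 3 / 6) :=
        affine_le_lambda'_mul_cubic hN1 hN2 ht
    _ ≤ lambda' N * Real.exp (-(8 / 7)) * Real.exp (8 / 7 * t) := by
        gcongr
        exact exp_neg_eight_div_seven_gt.le

theorem w_three_half_subsolution_general (N : ℕ) (hN1 : 13 ≤ N) (hN2 : N ≤ 31)
    (w : EuclideanSpace ℝ (Fin N) → ℝ)
    (hw : ∀ x : EuclideanSpace ℝ (Fin N),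
      w x = -4 * Real.log ‖x‖ - 8 / 7 + (8 / 7) * ‖x‖ ^ ((7 : ℝ) / 2))
    (x : EuclideanSpace ℝ (Fin N)) (hx : x ≠ 0) :
    lap (lap w) x ≤ lambda' N * Real.exp (w x) := by
  obtain rfl : w = wm (7 / 2) := funext fun y => by rw [hw, wm]; norm_num
  rw [lap_eq_laplacian, lap_eq_laplacian,
    bilaplacian_wm_le_mul_exp_wm_iff (by norm_num) hx, finrank_euclideanSpace_fin]
  convert affine_le_lambda'_mul_exp hN1 hN2 (t := ‖x‖ ^ ((7 : ℝ) / 2)) (by positivity) using 1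
  · ring
  · norm_num

theorem w_three_half_subsolution (N : ℕ) (hN1 : 13 ≤ N) (hN2 : N ≤ 31)
    (w : EuclideanSpace ℝ (Fin N) → ℝ)
    (hw : ∀ x : EuclideanSpace ℝ (Fin N),
      w x = -4 * Real.log ‖x‖ - 8 / 7 + (8 / 7) * ‖x‖ ^ ((7 : ℝ) / 2))
    (x : EuclideanSpace ℝ (Fin N)) (hx : x ≠ 0) (hx1 : ‖x‖ < 1) :
    lap (lap w) x ≤ lambda' N * Real.exp (w x) :=
  w_three_half_subsolution_general N hN1 hN2 w hw x hx
end
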